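/- Let 𝔊 be a permutation group acting on a finite set V such that every point stabilizer is trivial, and let B be a minimal (nontrivial) block for 𝔊 contained in some orbit. Then the setwise stabilizer 𝔊_B is a cyclic group of prime order, and |𝔊_B| = |B|. -/

import Mathlib

/-! Since the action is free, `𝔊_B` acts regularly on `B`, so `|𝔊_B| = |B|`. For any `g ≠ 1` in
`𝔊_B` and `a ∈ B`, the orbit of `a` under `⟨g⟩` is a block inside `B` of size `ord g > 1`,
so by minimality it is all of `B`. Taking `g` of prime order `p` (Cauchy) gives
`|𝔊_B| = |B| = p`. -/

open Pointwise

namespace MulAction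

variable {G X : Type*} [Group G] [MulAction G X] {B : Set X} {a : X}

lemma stabilizer_subgroup_eq_bot (ha : stabilizer G a = ⊥) (K : Subgroup G) :
    stabilizer K a = ⊥ := by
  rw [eq_bot_iff]
  intro k hk
  have hk' : (k : G) ∈ stabilizer G a := hk
  rw [ha, Subgroup.mem_bot] at hk'
  exact Subgroup.mem_bot.mpr (Subtype.ext hk')

lemma card_orbit_of_stabilizer_eq_bot (ha : stabilizer G a = ⊥) :
    Nat.card (orbit G a) = Nat.card G := by
  rw [Nat.card_coe_set_eq, ← index_stabilizer, ha, Subgroup.index_bot]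

lemma orbit_subset_of_le_stabilizer {K : Subgroup G} (hK : K ≤ stabilizer G B) (ha : a ∈ B) :
    orbit K a ⊆ B := by
  rintro _ ⟨k, rfl⟩
  rw [← mem_stabilizer_iff.mp (hK k.2)]
  exact Set.smul_mem_smul_set ha

lemma IsBlock.orbit_stabilizer_eq_of_subset_orbit (hB : IsBlock G B) (ha : a ∈ B)
    (hBa : B ⊆ orbit G a) : orbit (stabilizer G B) a = B := by
  refine (orbit_subset_of_le_stabilizer le_rfl ha).antisymm fun x hx => ?_
  obtain ⟨k, rfl⟩ := hBa hx
  exact ⟨⟨k, hB.smul_eq_of_mem ha hx⟩, rfl⟩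

lemma IsBlock.card_stabilizer_eq_card (ha₀ : stabilizer G a = ⊥) (hB : IsBlock G B)
    (ha : a ∈ B) (hBa : B ⊆ orbit G a) : Nat.card (stabilizer G B) = Nat.card B := by
  rw [← card_orbit_of_stabilizer_eq_bot (stabilizer_subgroup_eq_bot ha₀ _),
    hB.orbit_stabilizer_eq_of_subset_orbit ha hBa]

lemma orderOf_eq_card_of_mem_stabilizer_of_minimal (ha₀ : stabilizer G a = ⊥) (ha : a ∈ B)
    (hmin : ∀ B' : Set X, IsBlock G B' → B'.Nonempty → B' ⊆ B → B' = B ∨ ∃ b : X, B' = {b})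
    {g : G} (hg : g ∈ stabilizer G B) (hg₁ : g ≠ 1) : orderOf g = Nat.card B := by
  have hcard : Nat.card (orbit (Subgroup.zpowers g) a) = orderOf g := by
    rw [card_orbit_of_stabilizer_eq_bot (stabilizer_subgroup_eq_bot ha₀ _), Nat.card_zpowers]
  have hblock : IsBlock G (orbit (Subgroup.zpowers g) a) :=
    IsBlock.of_orbit (ha₀ ▸ bot_le)
  have hsub : orbit (Subgroup.zpowers g) a ⊆ B :=
    orbit_subset_of_le_stabilizer (Subgroup.zpowers_le.mpr hg) ha
  rcases hmin _ hblock ⟨a, mem_orbit_self a⟩ hsub with heq | ⟨b, hb⟩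
  · rw [← heq, hcard]
  · rw [hb, Nat.card_unique] at hcard
    exact absurd (orderOf_eq_one_iff.mp hcard.symm) hg₁

end MulAction

theorem stmt_16_general (G : Type*) {V : Type*} [Group G] [MulAction G V]
    (htriv : ∀ v : V, MulAction.stabilizer G v = ⊥)
    (B : Set V) (hB : MulAction.IsBlock G B)
    (t : V) (hBt : B ⊆ MulAction.orbit G t)
    (hcard : 1 < Nat.card B)
    (hmin : ∀ B' : Set V, MulAction.IsBlock G B' → B'.Nonempty → B' ⊆ B →
      B' = B ∨ ∃ b : V, B' = {b}) :
    IsCyclic (MulAction.stabilizer G B) ∧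
      (Nat.card (MulAction.stabilizer G B)).Prime ∧
      Nat.card (MulAction.stabilizer G B) = Nat.card B := by
  obtain ⟨a, ha⟩ : B.Nonempty := Set.nonempty_coe_sort.mp (Nat.card_pos_iff.mp (by omega)).1
  have hBa : B ⊆ MulAction.orbit G a := by rwa [MulAction.orbit_eq_iff.mpr (hBt ha)]
  have hcardH := hB.card_stabilizer_eq_card (htriv a) ha hBa
  have : Finite (MulAction.stabilizer G B) := Nat.finite_of_card_ne_zero (by omega)
  obtain ⟨p, hp, hpdvd⟩ := (Nat.card (MulAction.stabilizer G B)).exists_prime_and_dvd (by omega)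
  have : Fact p.Prime := ⟨hp⟩
  obtain ⟨g, hg⟩ := exists_prime_orderOf_dvd_card' p hpdvd
  have hgp : orderOf (g : G) = p := by rw [orderOf_submonoid, hg]
  have hg₁ : (g : G) ≠ 1 := fun h => hp.one_lt.ne' (by rw [← hgp, h, orderOf_one])
  have hpB := MulAction.orderOf_eq_card_of_mem_stabilizer_of_minimal (htriv a) ha hmin g.2 hg₁
  have hHp : Nat.card (MulAction.stabilizer G B) = p := by rw [hcardH, ← hpB, hgp]
  exact ⟨isCyclic_of_prime_card hHp, hHp ▸ hp, hcardH⟩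

/-- If all point stabilizers are trivial and B is a minimal (nontrivial) block contained in
an orbit, then the setwise stabilizer of B is cyclic of prime order, of order |B|. -/
theorem stmt_16 (G : Type*) {V : Type*} [Group G] [Fintype V] [MulAction G V]
    (htriv : ∀ v : V, MulAction.stabilizer G v = ⊥)
    (B : Set V) (hB : MulAction.IsBlock G B)
    (t : V) (hBt : B ⊆ MulAction.orbit G t)
    (hcard : 1 < Nat.card B)
    (hmin : ∀ B' : Set V, MulAction.IsBlock G B' → B'.Nonempty → B' ⊆ B →
      B' = B ∨ ∃ b : V, B' = {b}) :
    IsCyclic (MulAction.stabilizer G B) ∧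
      (Nat.card (MulAction.stabilizer G B)).Prime ∧
      Nat.card (MulAction.stabilizer G B) = Nat.card B :=
  stmt_16_general G htriv B hB t hBt hcard hmin
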